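/- (Scarf complexes of forests.) Let G be a finite simple graph that is a forest (contains no cycles). Then a set σ of edges of G is a Scarf face of I(G) if and only if dist_G(e, e') ≠ 1 for all distinct edges e, e' ∈ σ. Equivalently, the Scarf complex of I(G) is the clique complex of the graph on the edge set of G in which two distinct edges e, e' are adjacent exactly when dist_G(e, e') ≠ 1. -/
import Mathlib


/-- The monomial (exponent vector) of an edge: `1` on its endpoints, `0` elsewhere. -/
def edgeMon {V : Type*} [DecidableEq V] (e : Sym2 V) : V → ℕ :=
  fun x => if x ∈ e then 1 else 0

/-- The lcm (componentwise max) of the monomials of a finite set of edges. -/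
def eLcm {V : Type*} [DecidableEq V] (σ : Finset (Sym2 V)) : V → ℕ :=
  σ.sup edgeMon

/-- `σ` is a Scarf face of the edge ideal `I(G)`, identified with a set of edges of `G`:
its lcm is distinct from the lcm of any other set of edges of `G`. -/
def IsScarf {V : Type*} [DecidableEq V] (G : SimpleGraph V) (σ : Finset (Sym2 V)) : Prop :=
  (∀ e ∈ σ, e ∈ G.edgeSet) ∧
    ∀ τ : Finset (Sym2 V), (∀ e ∈ τ, e ∈ G.edgeSet) → eLcm τ = eLcm σ → τ = σ

/-- `dist_G(e, f) = 0`: the two edges share a vertex. -/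
def Dist0 {V : Type*} (e f : Sym2 V) : Prop := ∃ x, x ∈ e ∧ x ∈ f

/-- `dist_G(e, f) = 1`: the edges are vertex-disjoint, but some endpoint of `e` is
adjacent in `G` to some endpoint of `f`. -/
def Dist1 {V : Type*} (G : SimpleGraph V) (e f : Sym2 V) : Prop :=
  ¬ Dist0 e f ∧ ∃ x ∈ e, ∃ y ∈ f, G.Adj x y

lemma eLcm_apply {V : Type*} [DecidableEq V] (σ : Finset (Sym2 V)) (x : V) :
    eLcm σ x = if ∃ e ∈ σ, x ∈ e then 1 else 0 := by
  classical
  unfold eLcm edgeMon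
  rw [Finset.sup_apply]
  split
  · next h =>
    obtain ⟨e, he, hx⟩ := h
    refine le_antisymm (Finset.sup_le fun f _ => ?_) ?_
    · split <;> simp
    · calc (1:ℕ) = (fun f : Sym2 V => if x ∈ f then 1 else 0) e := by simp [hx]
        _ ≤ _ := Finset.le_sup (f := fun f : Sym2 V => if x ∈ f then 1 else 0) he
  · next h =>
    push_neg at h
    simp only [Nat.le_zero, ← Nat.le_zero] at *
    refine Finset.sup_le fun f hf => ?_
    simp [h f hf]

lemma eLcm_eq_iff {V : Type*} [DecidableEq V] (σ τ : Finset (Sym2 V)) :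
    eLcm τ = eLcm σ ↔ ∀ x, (∃ e ∈ τ, x ∈ e) ↔ (∃ e ∈ σ, x ∈ e) := by
  classical
  constructor
  · intro h x
    have := congrFun h x
    rw [eLcm_apply, eLcm_apply] at this
    by_cases h1 : ∃ e ∈ τ, x ∈ e <;> by_cases h2 : ∃ e ∈ σ, x ∈ e <;>
      simp [h1, h2] at this ⊢
  · intro h
    funext x
    rw [eLcm_apply, eLcm_apply]
    exact if_congr (h x) rfl rfl

lemma triangle_free {V : Type*} {G : SimpleGraph V} (hG : G.IsAcyclic)
    {a b c : V} (hab : G.Adj a b) (hbc : G.Adj b c) (hca : G.Adj c a) : False := by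
  have hpu := SimpleGraph.isAcyclic_iff_path_unique.mp hG
  have hne1 : a ≠ b := hab.ne
  have hne2 : b ≠ c := hbc.ne
  have hne3 : c ≠ a := hca.ne
  let p1 : G.Walk a b := SimpleGraph.Walk.cons hab SimpleGraph.Walk.nil
  let p2 : G.Walk a b := SimpleGraph.Walk.cons hca.symm
    (SimpleGraph.Walk.cons hbc.symm SimpleGraph.Walk.nil)
  have hp1 : p1.IsPath := by simp [p1, hne1]
  have hp2 : p2.IsPath := by
    simp [p2, SimpleGraph.Walk.isPath_def, hne1, hne2, hne3, Ne.symm hne3, Ne.symm hne2]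
  have := hpu ⟨p1, hp1⟩ ⟨p2, hp2⟩
  have hw : p1 = p2 := congrArg Subtype.val this
  have hlen := congrArg SimpleGraph.Walk.length hw
  simp [p1, p2] at hlen

lemma eq_of_two_mem {V : Type*} {x y : V} {e : Sym2 V} (hne : x ≠ y)
    (hx : x ∈ e) (hy : y ∈ e) : e = s(x, y) :=
  (Sym2.mem_and_mem_iff hne).mp ⟨hx, hy⟩

theorem stmt12 {V : Type*} [Fintype V] [DecidableEq V] (G : SimpleGraph V)
    (hG : G.IsAcyclic) (σ : Finset (Sym2 V)) :
    IsScarf G σ ↔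
      ((∀ e ∈ σ, e ∈ G.edgeSet) ∧ ∀ e ∈ σ, ∀ e' ∈ σ, e ≠ e' → ¬ Dist1 G e e') := by
  constructor
  · rintro ⟨hsub, huniq⟩
    refine ⟨hsub, fun e he e' he' hne hd1 => ?_⟩
    obtain ⟨hdisj, x, hx, y, hy, hadj⟩ := hd1
    have hxy : x ≠ y := hadj.ne
    have hgE : s(x, y) ∈ G.edgeSet := G.mem_edgeSet.mpr hadj
    have hex : e ≠ s(x, y) := by
      rintro rfl
      exact hdisj ⟨y, Sym2.mem_mk_right x y, hy⟩
    have hex' : e' ≠ s(x, y) := by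
      rintro rfl
      exact hdisj ⟨x, hx, Sym2.mem_mk_left x y⟩
    by_cases hg : s(x, y) ∈ σ
    · -- remove the connecting edge: the cover is unchanged
      have hτ : σ.erase s(x, y) = σ := by
        refine huniq _ (fun a ha => hsub a (Finset.mem_of_mem_erase ha)) ?_
        rw [eLcm_eq_iff]
        intro z
        constructor
        · rintro ⟨f, hf, hz⟩
          exact ⟨f, Finset.mem_of_mem_erase hf, hz⟩
        · rintro ⟨f, hf, hz⟩
          by_cases hfg : f = s(x, y)
          · subst hfg
            rcases Sym2.mem_iff.mp hz with rfl | rfl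
            · exact ⟨e, Finset.mem_erase.mpr ⟨hex, he⟩, hx⟩
            · exact ⟨e', Finset.mem_erase.mpr ⟨hex', he'⟩, hy⟩
          · exact ⟨f, Finset.mem_erase.mpr ⟨hfg, hf⟩, hz⟩
      exact Finset.notMem_erase _ _ (hτ.symm ▸ hg)
    · -- add the connecting edge: the cover is unchanged
      have hτ : insert s(x, y) σ = σ := by
        refine huniq _ (fun a ha => ?_) ?_
        · rcases Finset.mem_insert.mp ha with rfl | ha
          · exact hgE
          · exact hsub a ha
        · rw [eLcm_eq_iff]
          intro z
          constructor
          · rintro ⟨f, hf, hz⟩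
            rcases Finset.mem_insert.mp hf with rfl | hf
            · rcases Sym2.mem_iff.mp hz with rfl | rfl
              · exact ⟨e, he, hx⟩
              · exact ⟨e', he', hy⟩
            · exact ⟨f, hf, hz⟩
          · rintro ⟨f, hf, hz⟩
            exact ⟨f, Finset.mem_insert_of_mem hf, hz⟩
      exact hg (hτ ▸ Finset.mem_insert_self _ _)
  · rintro ⟨hsub, hd⟩
    refine ⟨hsub, fun τ hτsub hlcm => ?_⟩
    rw [eLcm_eq_iff] at hlcm
    have hτσ : τ ⊆ σ := by
      intro f hf
      obtain ⟨x, y, hadj, rfl⟩ : ∃ x y, G.Adj x y ∧ f = s(x, y) := by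
        have := hτsub f hf
        induction f using Sym2.ind with
        | _ a b => exact ⟨a, b, G.mem_edgeSet.mp this, rfl⟩
      have hxy : x ≠ y := hadj.ne
      obtain ⟨e, he, hx⟩ := (hlcm x).mp ⟨_, hf, Sym2.mem_mk_left x y⟩
      obtain ⟨e', he', hy⟩ := (hlcm y).mp ⟨_, hf, Sym2.mem_mk_right x y⟩
      by_cases hye : y ∈ e
      · rwa [← eq_of_two_mem hxy hx hye]
      by_cases hxe' : x ∈ e'
      · rwa [← eq_of_two_mem hxy hxe' hy]
      have hee' : e ≠ e' := by rintro rfl; exact hye hy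
      by_cases hd0 : Dist0 e e'
      · obtain ⟨z, hze, hze'⟩ := hd0
        have hzx : z ≠ x := fun h => hxe' (h ▸ hze')
        have hzy : z ≠ y := fun h => hye (h ▸ hze)
        have he1 : e = s(x, z) := eq_of_two_mem (Ne.symm hzx) hx hze
        have he2 : e' = s(y, z) := eq_of_two_mem (Ne.symm hzy) hy hze'
        have hadj1 : G.Adj x z := G.mem_edgeSet.mp (he1 ▸ hsub e he)
        have hadj2 : G.Adj y z := G.mem_edgeSet.mp (he2 ▸ hsub e' he')
        exact absurd (triangle_free hG hadj hadj2 hadj1.symm) id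
      · exact absurd ⟨hd0, x, hx, y, hy, hadj⟩ (hd e he e' he' hee')
    refine Finset.Subset.antisymm hτσ fun e he => ?_
    obtain ⟨x, y, hadj, rfl⟩ : ∃ x y, G.Adj x y ∧ e = s(x, y) := by
      have := hsub e he
      induction e using Sym2.ind with
      | _ a b => exact ⟨a, b, G.mem_edgeSet.mp this, rfl⟩
    have hxy : x ≠ y := hadj.ne
    obtain ⟨f, hf, hx⟩ := (hlcm x).mpr ⟨_, he, Sym2.mem_mk_left x y⟩
    obtain ⟨f', hf', hy⟩ := (hlcm y).mpr ⟨_, he, Sym2.mem_mk_right x y⟩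
    by_cases hyf : y ∈ f
    · rwa [← eq_of_two_mem hxy hx hyf]
    by_cases hxf' : x ∈ f'
    · rwa [← eq_of_two_mem hxy hxf' hy]
    have hff' : f ≠ f' := by rintro rfl; exact hyf hy
    by_cases hd0 : Dist0 f f'
    · obtain ⟨z, hzf, hzf'⟩ := hd0
      have hzx : z ≠ x := fun h => hxf' (h ▸ hzf')
      have hzy : z ≠ y := fun h => hyf (h ▸ hzf)
      have he1 : f = s(x, z) := eq_of_two_mem (Ne.symm hzx) hx hzf
      have he2 : f' = s(y, z) := eq_of_two_mem (Ne.symm hzy) hy hzf'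
      have hadj1 : G.Adj x z := G.mem_edgeSet.mp (he1 ▸ hsub f (hτσ hf))
      have hadj2 : G.Adj y z := G.mem_edgeSet.mp (he2 ▸ hsub f' (hτσ hf'))
      exact absurd (triangle_free hG hadj hadj2 hadj1.symm) id
    · exact absurd ⟨hd0, x, hx, y, hy, hadj⟩ (hd f (hτσ hf) f' (hτσ hf') hff')
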